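/- For the SCEM, the solution map N_E satisfies (id − P_{E,A}(B)) N_E(A+B) = N_E(A), and if ‖B‖ < min{c_A, c_ζ} then ‖P_{E,A}(B)‖_{L(H)} < 1 and N_E(A+B) = Σ_{k=0}^∞ P_{E,A}(B)^k N_E(A), with convergence in operator norm on L(ℂ^m_⋄, H). -/

import Mathlib

/- Statement 14: for the SCEM, `(id − P_{E,A}(B)) N_E(A+B) = N_E(A)`, and if
`‖B‖ < min{c_A,c_ζ}` then `‖P_{E,A}(B)‖ < 1` and
`N_E(A+B) = Σ_{k=0}^∞ P_{E,A}(B)^k N_E(A)` with convergence in operator norm on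
`L(ℂ^m_⋄, H)`.  `HE` stands for the quotient space `H`, `K` for `ℂ^m_⋄`,
`aE : coefficient → HE → HE → ℂ` for the family of SCEM forms `a_C` (whose
`C`-dependent part is `⟨·,·⟩_C`, so that `a_{A+B} = a_A + ⟨·,·⟩_B`), `b` for the
family `⟨·,·⟩_C`, `Vmap` for the electrode-voltage component map, and
`coeffNorm μ B` for `‖B‖ = ess sup ‖B(x)‖₂`.  `N_E(C) I` is the unique solution
of `a_C[N_E(C)I, (v,V)] = I·conj V = ⟪Vmap (v,V), I⟫`, and `P_{E,A}(B)` is given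
by `a_A[P_{E,A}(B)y, v] = −⟨y,v⟩_B`. -/

open MeasureTheory Matrix

noncomputable section

def specNorm {d : ℕ} (M : Matrix (Fin d) (Fin d) ℂ) : ℝ :=
  ‖(Matrix.toEuclideanCLM (𝕜 := ℂ) M :
      EuclideanSpace ℂ (Fin d) →L[ℂ] EuclideanSpace ℂ (Fin d))‖

def coeffNorm {d : ℕ} (μ : Measure (EuclideanSpace ℝ (Fin d)))
    (B : EuclideanSpace ℝ (Fin d) → Matrix (Fin d) (Fin d) ℂ) : ℝ :=
  essSup (fun x => specNorm (B x)) μ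

theorem eq_of_forall_form_eq_of_coercive {E : Type*} [NormedAddCommGroup E] (a : E → E → ℂ)
    {c : ℝ} (hc : 0 < c) (ha_sub : ∀ w w' v, a (w - w') v = a w v - a w' v)
    (ha_coer : ∀ v, c * ‖v‖ ^ 2 ≤ (a v v).re) {x y : E} (h : ∀ v, a x v = a y v) : x = y := by
  have hcoer := ha_coer (x - y)
  rw [ha_sub, h, sub_self, Complex.zero_re] at hcoer
  have hsq : ‖x - y‖ ^ 2 ≤ 0 := nonpos_of_mul_nonpos_right hcoer hc
  have hnorm : ‖x - y‖ = 0 := pow_eq_zero_iff two_ne_zero |>.mp (le_antisymm hsq (sq_nonneg _))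
  exact sub_eq_zero.mp (norm_eq_zero.mp hnorm)

section NeumannSeries

variable {𝕜 E F : Type*} [NontriviallyNormedField 𝕜]
  [NormedAddCommGroup E] [NormedSpace 𝕜 E] [CompleteSpace E]
  [NormedAddCommGroup F] [NormedSpace 𝕜 F]

theorem ContinuousLinearMap.hasSum_pow_comp_of_id_sub_comp_eq {P : E →L[𝕜] E} (hP : ‖P‖ < 1)
    {N N' : F →L[𝕜] E} (h : (ContinuousLinearMap.id 𝕜 E - P).comp N' = N) :
    HasSum (fun k : ℕ => (P ^ k).comp N) N' := by
  have hgeom : HasSum (fun k : ℕ => P ^ k) (∑' k : ℕ, P ^ k) :=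
    (summable_geometric_of_norm_lt_one hP).hasSum
  have hinv : (∑' k : ℕ, P ^ k) * (1 - P) = 1 := geom_series_mul_neg P hP
  have hmap : HasSum (fun k : ℕ => (P ^ k).comp N) ((∑' k : ℕ, P ^ k).comp N) :=
    hgeom.mapL ((ContinuousLinearMap.compL 𝕜 F E E).flip N)
  have hlimit : (∑' k : ℕ, P ^ k).comp N = N' := by
    calc (∑' k : ℕ, P ^ k).comp N = ((∑' k : ℕ, P ^ k) * (1 - P)).comp N' := by
          rw [mul_def, comp_assoc, one_def, h]
      _ = N' := by rw [hinv, one_def, id_comp]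
  exact hlimit ▸ hmap

end NeumannSeries

theorem stmt14_general {d : ℕ} (μ : Measure (EuclideanSpace ℝ (Fin d)))
    {HE K : Type*} [NormedAddCommGroup HE] [InnerProductSpace ℂ HE] [CompleteSpace HE]
    [NormedAddCommGroup K] [InnerProductSpace ℂ K] [CompleteSpace K]
    (Vmap : HE →L[ℂ] K)
    (aE : (EuclideanSpace ℝ (Fin d) → Matrix (Fin d) (Fin d) ℂ) → HE → HE → ℂ)
    (b : (EuclideanSpace ℝ (Fin d) → Matrix (Fin d) (Fin d) ℂ) → HE → HE → ℂ)
    (A B : EuclideanSpace ℝ (Fin d) → Matrix (Fin d) (Fin d) ℂ) (cA cζ : ℝ)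
    (hsub1 : ∀ D (w w' v : HE), aE D (w - w') v = aE D w v - aE D w' v)
    -- `a_{A+B} = a_A + ⟨·,·⟩_B`: the admittance part is unchanged
    (hcoefadd : ∀ w v, aE (A + B) w v = aE A w v + b B w v)
    (hcA : 0 < cA) (hcζ : 0 < cζ)
    (hAcoer : ∀ v : HE, min cA cζ * ‖v‖ ^ 2 ≤ (aE A v v).re)
    (hB : coeffNorm μ B < min cA cζ)
    (NA NApB : K →L[ℂ] HE) (PAB : HE →L[ℂ] HE)
    (hNA : ∀ (I : K) (v : HE), aE A (NA I) v = (inner ℂ (Vmap v) I : ℂ))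
    (hNApB : ∀ (I : K) (v : HE), aE (A + B) (NApB I) v = (inner ℂ (Vmap v) I : ℂ))
    (hPAB : ∀ y v, aE A (PAB y) v = -b B y v)
    (hPABle : ‖PAB‖ ≤ coeffNorm μ B / min cA cζ) :
    (ContinuousLinearMap.id ℂ HE - PAB).comp NApB = NA ∧
    ‖PAB‖ < 1 ∧
    Summable (fun k : ℕ => (PAB ^ k).comp NA) ∧
    NApB = ∑' k : ℕ, (PAB ^ k).comp NA := by
  have hc : 0 < min cA cζ := lt_min hcA hcζ
  have hfactor : (ContinuousLinearMap.id ℂ HE - PAB).comp NApB = NA := by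
    ext I
    refine eq_of_forall_form_eq_of_coercive (aE A) hc (hsub1 A) hAcoer fun v => ?_
    -- `a_A[(id - P) y, v] = a_A[y, v] + ⟨y, v⟩_B = a_{A+B}[y, v]`
    calc aE A (NApB I - PAB (NApB I)) v = aE (A + B) (NApB I) v := by
          rw [hsub1, hPAB, hcoefadd, sub_neg_eq_add]
      _ = aE A (NA I) v := by rw [hNApB, hNA]
  have hP : ‖PAB‖ < 1 := hPABle.trans_lt ((div_lt_one hc).2 hB)
  have hsum := ContinuousLinearMap.hasSum_pow_comp_of_id_sub_comp_eq hP hfactor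
  exact ⟨hfactor, hP, hsum.summable, hsum.tsum_eq.symm⟩

theorem stmt14 {d : ℕ} (μ : Measure (EuclideanSpace ℝ (Fin d)))
    {HE K : Type*} [NormedAddCommGroup HE] [InnerProductSpace ℂ HE] [CompleteSpace HE]
    [NormedAddCommGroup K] [InnerProductSpace ℂ K] [CompleteSpace K]
    (Vmap : HE →L[ℂ] K)
    (aE : (EuclideanSpace ℝ (Fin d) → Matrix (Fin d) (Fin d) ℂ) → HE → HE → ℂ)
    (b : (EuclideanSpace ℝ (Fin d) → Matrix (Fin d) (Fin d) ℂ) → HE → HE → ℂ)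
    (A B : EuclideanSpace ℝ (Fin d) → Matrix (Fin d) (Fin d) ℂ) (cA cζ : ℝ)
    (hsub1 : ∀ D (w w' v : HE), aE D (w - w') v = aE D w v - aE D w' v)
    -- `a_{A+B} = a_A + ⟨·,·⟩_B`: the admittance part is unchanged
    (hcoefadd : ∀ w v, aE (A + B) w v = aE A w v + b B w v)
    (hBbdd : ∀ w v, ‖b B w v‖ ≤ coeffNorm μ B * ‖w‖ * ‖v‖)
    (hcA : 0 < cA) (hcζ : 0 < cζ)
    (hAcoer : ∀ v : HE, min cA cζ * ‖v‖ ^ 2 ≤ (aE A v v).re)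
    (hApBcoer : ∀ v : HE,
      (min cA cζ - coeffNorm μ B) * ‖v‖ ^ 2 ≤ (aE (A + B) v v).re)
    (hB : coeffNorm μ B < min cA cζ) (hB0 : 0 ≤ coeffNorm μ B)
    (NA NApB : K →L[ℂ] HE) (PAB : HE →L[ℂ] HE)
    (hNA : ∀ (I : K) (v : HE), aE A (NA I) v = (inner ℂ (Vmap v) I : ℂ))
    (hNApB : ∀ (I : K) (v : HE), aE (A + B) (NApB I) v = (inner ℂ (Vmap v) I : ℂ))
    (hPAB : ∀ y v, aE A (PAB y) v = -b B y v)
    (hPABle : ‖PAB‖ ≤ coeffNorm μ B / min cA cζ) :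
    (ContinuousLinearMap.id ℂ HE - PAB).comp NApB = NA ∧
    ‖PAB‖ < 1 ∧
    Summable (fun k : ℕ => (PAB ^ k).comp NA) ∧
    NApB = ∑' k : ℕ, (PAB ^ k).comp NA :=
  stmt14_general μ Vmap aE b A B cA cζ hsub1 hcoefadd hcA hcζ hAcoer hB NA NApB PAB hNA hNApB hPAB
    hPABle

end
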